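/- arXiv:1106.4134 — 2 statements merged into one kernel-verified Lean document; each statement's English description precedes it below -/
import Mathlib

section
/- Let X be a finite abelian group with character group Y, n ≥ 2, and α_{ij} ∈ Aut(X) with α_{1j} = α_{i1} = Id for all i,j = 1,…,n. Suppose the characteristic functions μ̂_i satisfy Π_{i=1}^n μ̂_i(Σ_{j=1}^n α̃_{ij} u_j) = Π_{i,j} μ̂_i(α̃_{ij} u_j) and F_{μ_i} = {0} for all i. Then the homomorphism π : Y^n → Y^n given by π(u_1,…,u_n) = (Σ_j α̃_{1j}u_j, …, Σ_j α̃_{nj}u_j) is an automorphism of Y^n, provided all μ̂_i are nonnegative. -/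
/-!
If `π u = 0`, the functional equation gives `∏_{i,j} μ̂_i(α̃_{ij} u_j) = ∏_i μ̂_i(0) = 1`.
Every factor lies in `[0, 1]`, so every factor equals `1`. In the first row `α_{1j} = Id`,
hence `μ̂_1(u_j) = 1`, i.e. `u_j ∈ F_{μ_1} = {0}`. So `π` is an injective endomorphism of the
finite group `Y^n`, hence an automorphism.
-/

/-- A probability distribution on a finite set, given by its mass function. -/
def IsDist {X : Type*} [Fintype X] (μ : X → ℝ) : Prop :=
  (∀ x, 0 ≤ μ x) ∧ ∑ x, μ x = 1

/-- The characteristic function `μ̂(y) = ∑_x (x,y) μ({x})` of a distribution `μ`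
on a finite abelian group `X`, where `y` is a character of `X`. -/
noncomputable def charFun {X : Type*} [AddCommGroup X] [Fintype X]
    (μ : X → ℝ) (y : AddChar X ℂ) : ℂ :=
  ∑ x, (μ x : ℂ) * y x

/-- The Haar (uniform) distribution `m_K` on a subgroup `K` of `X`. -/
noncomputable def haarDist {X : Type*} [AddCommGroup X] [Fintype X]
    (K : AddSubgroup X) : X → ℝ :=
  (K : Set X).indicator fun _ => ((Nat.card K : ℝ))⁻¹

/-- The degenerate distribution `E_{x₀}` concentrated at `x₀`. -/
def diracDist {X : Type*} [DecidableEq X] (x₀ : X) : X → ℝ :=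
  fun x => if x = x₀ then 1 else 0

/-- Convolution of two distributions on a finite abelian group. -/
noncomputable def convDist {X : Type*} [AddCommGroup X] [Fintype X]
    (μ ν : X → ℝ) : X → ℝ :=
  fun x => ∑ t, μ t * ν (x - t)

/-- `μ` is an idempotent distribution: a shift of the Haar distribution on a subgroup. -/
noncomputable def IsIdempotent {X : Type*} [AddCommGroup X] [Fintype X] [DecidableEq X]
    (μ : X → ℝ) : Prop :=
  ∃ (K : AddSubgroup X) (x₀ : X), μ = convDist (haarDist K) (diracDist x₀)

/-- The linear forms `L_j = ∑_i A i j (ξ i)`, `j = 1,…,k`, of independent random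
variables `ξ i` with distributions `μ i` are independent: the joint distribution of
`(L_1, …, L_k)` equals the product of the marginal distributions. -/
def FormsIndep {X : Type*} [AddCommGroup X] [Fintype X] [DecidableEq X] {n k : ℕ}
    (μ : Fin n → X → ℝ) (A : Fin n → Fin k → X → X) : Prop :=
  ∀ x : Fin k → X,
    (∑ t : Fin n → X, if (∀ j, ∑ i, A i j (t i) = x j) then ∏ i, μ i (t i) else 0) =
    ∏ j, ∑ t : Fin n → X, if (∑ i, A i j (t i) = x j) then ∏ i, μ i (t i) else 0

/-- The adjoint `α̃` of an endomorphism `α` of `X`, acting on the character group: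
`(α x, y) = (x, α̃ y)`. -/
noncomputable def adjChar {X : Type*} [AddCommGroup X] (α : X →+ X)
    (y : AddChar X ℂ) : AddChar X ℂ :=
  y.compAddMonoidHom α

lemma eq_one_of_prod_eq_one_of_nonneg_of_le_one {ι : Type*} [Fintype ι] {f : ι → ℝ}
    (h0 : ∀ i, 0 ≤ f i) (h1 : ∀ i, f i ≤ 1) (hprod : ∏ i, f i = 1) (i : ι) : f i = 1 := by
  classical
  have hrest : ∏ j ∈ Finset.univ.erase i, f j ≤ 1 :=
    Finset.prod_le_one (fun j _ => h0 j) (fun j _ => h1 j)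
  have hsplit := Finset.mul_prod_erase Finset.univ f (Finset.mem_univ i)
  rw [hprod] at hsplit
  nlinarith [h1 i, h0 i]

open ComplexOrder in
lemma Complex.eq_one_of_prod_eq_one_of_nonneg {ι : Type*} [Fintype ι] {z : ι → ℂ}
    (h0 : ∀ i, 0 ≤ z i) (h1 : ∀ i, ‖z i‖ ≤ 1) (hprod : ∏ i, z i = 1) (i : ι) : z i = 1 := by
  have hnorm : ∏ i, ‖z i‖ = 1 := by rw [← norm_prod, hprod, norm_one]
  rw [Complex.eq_coe_norm_of_nonneg (h0 i),
    eq_one_of_prod_eq_one_of_nonneg_of_le_one (fun i => norm_nonneg _) h1 hnorm i,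
    Complex.ofReal_one]

section CharFun

variable {X : Type*} [AddCommGroup X] [Fintype X] {μ : X → ℝ}

lemma charFun_one (hμ : IsDist μ) : charFun μ 1 = 1 := by
  simp only [charFun, AddChar.one_apply, mul_one]
  exact_mod_cast hμ.2

lemma norm_charFun_le_one (hμ : IsDist μ) (y : AddChar X ℂ) : ‖charFun μ y‖ ≤ 1 :=
  calc ‖charFun μ y‖ ≤ ∑ x, ‖(μ x : ℂ) * y x‖ := norm_sum_le _ _
    _ = ∑ x, μ x := by
        refine Finset.sum_congr rfl fun x _ => ?_
        rw [norm_mul, AddChar.norm_apply, mul_one, Complex.norm_real,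
          Real.norm_eq_abs, abs_of_nonneg (hμ.1 x)]
    _ = 1 := hμ.2

end CharFun

/-- The homomorphism `π(u)_i = ∑_j α̃_{ij} u_j`, written multiplicatively. -/
noncomputable def adjCharMatrix {X : Type*} [AddCommGroup X] {m n : Type*} [Fintype n]
    (α : m → n → X →+ X) : (n → AddChar X ℂ) →* (m → AddChar X ℂ) :=
  MonoidHom.mk' (fun u i => ∏ j, adjChar (α i j) (u j)) fun u v => by
    ext i x
    simp [adjChar, Finset.prod_mul_distrib]

open ComplexOrder in
lemma charFun_adjChar_eq_one_of_adjCharMatrix_eq_one {X : Type*} [AddCommGroup X] [Fintype X]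
    {m n : Type*} [Fintype m] [Fintype n] {μ : m → X → ℝ} {α : m → n → X →+ X}
    (hμ : ∀ i, IsDist (μ i)) (hpos : ∀ i y, 0 ≤ charFun (μ i) y)
    {u : n → AddChar X ℂ}
    (heq : ∏ i, charFun (μ i) (∏ j, adjChar (α i j) (u j)) =
      ∏ i, ∏ j, charFun (μ i) (adjChar (α i j) (u j)))
    (hu : adjCharMatrix α u = 1) (i : m) (j : n) :
    charFun (μ i) (adjChar (α i j) (u j)) = 1 := by
  have hrow : ∀ i, ∏ j, adjChar (α i j) (u j) = 1 := congrFun hu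
  have hprod : ∏ p : m × n, charFun (μ p.1) (adjChar (α p.1 p.2) (u p.2)) = 1 := by
    rw [Fintype.prod_prod_type, ← heq]
    simp only [hrow, charFun_one (hμ _), Finset.prod_const_one]
  exact Complex.eq_one_of_prod_eq_one_of_nonneg (fun _ => hpos _ _)
    (fun _ => norm_charFun_le_one (hμ _) _) hprod (i, j)

open ComplexOrder in
/-- The character group `Y` is multiplicative, so the sums are products and `{0}` is `{1}`;
an automorphism of `Y^n` is a bijective homomorphism. -/
theorem stmt9 {X : Type*} [AddCommGroup X] [Fintype X]
    (n : ℕ) (hn : 2 ≤ n)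
    (μ : Fin n → X → ℝ) (hμ : ∀ i, IsDist (μ i))
    (hpos : ∀ i y, 0 ≤ charFun (μ i) y)
    (α : Fin n → Fin n → (X ≃+ X))
    (hα1 : ∀ j, α ⟨0, by omega⟩ j = AddEquiv.refl X)
    (heq : ∀ u : Fin n → AddChar X ℂ,
      ∏ i, charFun (μ i) (∏ j, adjChar (α i j : X →+ X) (u j)) =
      ∏ i, ∏ j, charFun (μ i) (adjChar (α i j : X →+ X) (u j)))
    (hF : ∀ i, {y : AddChar X ℂ | charFun (μ i) y = 1} = {1}) :
    Function.Bijective (fun (u : Fin n → AddChar X ℂ) (i : Fin n) =>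
      ∏ j, adjChar (α i j : X →+ X) (u j)) := by
  let π := adjCharMatrix fun i j => (α i j : X →+ X)
  refine Finite.injective_iff_bijective.mp ((injective_iff_map_eq_one π).mpr fun u hu => ?_)
  funext j
  have hone : adjChar (α ⟨0, by omega⟩ j : X →+ X) (u j) ∈
      {y : AddChar X ℂ | charFun (μ ⟨0, by omega⟩) y = 1} :=
    charFun_adjChar_eq_one_of_adjCharMatrix_eq_one hμ hpos (heq u) hu _ j
  rw [hF, hα1, Set.mem_singleton_iff] at hone
  exact hone
end

section
/- Let μ be a probability distribution on a finite abelian group X and μ̄ the distribution defined by μ̄(M) = μ(−M). If the convolution ν = μ * μ̄ equals m_K for some subgroup K of X, then μ = m_K * E_x for some x ∈ X. -/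
/-!
Write `ν = μ * μ̄`. Since `μ ≥ 0`, `ν (s - t) ≥ μ s * μ t`, so the support of `μ` lies in a single
coset `x₀ + K`, which has `|K|` elements. On that coset `μ` sums to `1` while
`∑ μ² = ν 0 = 1 / |K|`: this is the equality case of Cauchy–Schwarz, so `μ = 1 / |K|` on the coset.
-/

open Finset

section Convolution

variable {X : Type*} [AddCommGroup X] [Fintype X]

theorem convDist_diracDist [DecidableEq X] (f : X → ℝ) (x₀ x : X) :
    convDist f (diracDist x₀) x = f (x - x₀) := by
  simp only [convDist, diracDist, mul_ite, mul_one, mul_zero, sub_eq_iff_comm, sum_ite_eq,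
    mem_univ, if_true]

theorem convDist_neg_zero (μ : X → ℝ) :
    convDist μ (fun x => μ (-x)) 0 = ∑ t, μ t ^ 2 := by
  simp [convDist, sq]

theorem mul_le_convDist_neg {μ : X → ℝ} (hμ : ∀ x, 0 ≤ μ x) (s t : X) :
    μ s * μ t ≤ convDist μ (fun x => μ (-x)) (s - t) := by
  have key := single_le_sum (fun u _ => mul_nonneg (hμ u) (hμ (-(s - t - u)))) (mem_univ s)
  simpa only [convDist, sub_sub_cancel_left, neg_neg] using key

theorem sub_mem_of_convDist_neg_eq_haarDist {μ : X → ℝ} (hμ : ∀ x, 0 ≤ μ x) {K : AddSubgroup X}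
    (hconv : convDist μ (fun x => μ (-x)) = haarDist K) {s t : X} (hs : μ s ≠ 0)
    (ht : μ t ≠ 0) : s - t ∈ K := by
  have hpos : 0 < convDist μ (fun x => μ (-x)) (s - t) :=
    (mul_pos ((hμ s).lt_of_ne' hs) ((hμ t).lt_of_ne' ht)).trans_le (mul_le_convDist_neg hμ s t)
  rw [hconv] at hpos
  exact Set.mem_of_indicator_ne_zero hpos.ne'

end Convolution

theorem eq_inv_card_of_sum_eq_one_of_sum_sq_eq {ι : Type*} {s : Finset ι} {f : ι → ℝ}
    (hsum : ∑ i ∈ s, f i = 1) (hsq : ∑ i ∈ s, f i ^ 2 = (#s : ℝ)⁻¹) :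
    ∀ i ∈ s, f i = (#s : ℝ)⁻¹ := by
  set c : ℝ := (#s : ℝ)⁻¹
  have hs : s.Nonempty := nonempty_of_sum_ne_zero (by rw [hsum]; exact one_ne_zero)
  have hcard : (#s : ℝ) * c ^ 2 = c := by
    have hs0 : (#s : ℝ) ≠ 0 := by exact_mod_cast hs.card_pos.ne'
    simp only [c]
    field_simp
  have hzero : ∑ i ∈ s, (f i - c) ^ 2 = 0 := by
    calc ∑ i ∈ s, (f i - c) ^ 2
        = ∑ i ∈ s, f i ^ 2 - 2 * c * ∑ i ∈ s, f i + #s * c ^ 2 := by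
          rw [sum_congr rfl fun i _ => (by ring : (f i - c) ^ 2 = f i ^ 2 - 2 * c * f i + c ^ 2),
            sum_add_distrib, sum_sub_distrib, ← mul_sum, sum_const, nsmul_eq_mul]
      _ = 0 := by rw [hsq, hsum, hcard]; ring
  intro i hi
  have hi0 := (sum_eq_zero_iff_of_nonneg fun j _ => sq_nonneg (f j - c)).mp hzero i hi
  exact sub_eq_zero.mp (pow_eq_zero_iff two_ne_zero |>.mp hi0)

theorem card_filter_sub_mem {X : Type*} [AddCommGroup X] [Fintype X] (K : AddSubgroup X)
    [DecidablePred (· ∈ K)] (x₀ : X) :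
    #{x | x - x₀ ∈ K} = Nat.card K := by
  rw [Nat.card_eq_fintype_card, ← card_univ]
  refine card_nbij' (fun x => if h : x - x₀ ∈ K then ⟨x - x₀, h⟩ else 0) (fun k => k + x₀)
    ?_ ?_ ?_ ?_ <;> intro _ _ <;> simp_all

/-- if `μ * μ̄ = m_K` (where `μ̄(M) = μ(-M)`) for a subgroup `K`,
then `μ = m_K * E_x` for some `x`. -/
theorem stmt13 {X : Type*} [AddCommGroup X] [Fintype X] [DecidableEq X]
    (μ : X → ℝ) (hμ : IsDist μ) (K : AddSubgroup X)
    (hconv : convDist μ (fun x => μ (-x)) = haarDist K) :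
    ∃ x₀ : X, μ = convDist (haarDist K) (diracDist x₀) := by
  classical
  obtain ⟨hpos, hsum⟩ := hμ
  obtain ⟨x₀, hx₀⟩ : ∃ x₀, μ x₀ ≠ 0 := by
    by_contra! h
    simp [h] at hsum
  set S : Finset X := {x | x - x₀ ∈ K}
  have hcard : #S = Nat.card K := card_filter_sub_mem K x₀
  have hoff : ∀ x ∉ S, μ x = 0 := fun x hx => by
    by_contra h
    exact hx (mem_filter.mpr ⟨mem_univ x, sub_mem_of_convDist_neg_eq_haarDist hpos hconv h hx₀⟩)
  have hS1 : ∑ x ∈ S, μ x = 1 := by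
    rw [← hsum, sum_subset (subset_univ S) fun x _ hx => hoff x hx]
  have hS2 : ∑ x ∈ S, μ x ^ 2 = (#S : ℝ)⁻¹ := by
    rw [sum_subset (subset_univ S) fun x _ hx => by rw [hoff x hx, sq, zero_mul],
      ← convDist_neg_zero, hconv, hcard]
    exact Set.indicator_of_mem K.zero_mem _
  have hconst := eq_inv_card_of_sum_eq_one_of_sum_sq_eq hS1 hS2
  rw [hcard] at hconst
  refine ⟨x₀, funext fun x => ?_⟩
  rw [convDist_diracDist, haarDist]
  by_cases hx : x ∈ S
  · rw [Set.indicator_of_mem (mem_filter.mp hx).2, hconst x hx]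
  · rw [Set.indicator_of_notMem fun h => hx (mem_filter.mpr ⟨mem_univ x, h⟩), hoff x hx]
end
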